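/- At every point (u, v, w) with W(u) > 0, f(u) ≠ 0 and cos w ≠ 0, the fourth fundamental form matrix of the rotational hypersurface is the diagonal matrix IV = diag(−ψ³/W^{7/2}, −(φ'³/(f·W^{3/2}))·cos²w, −φ'³/(f·W^{3/2})). -/

import Mathlib

open Real Matrix

noncomputable section

/-- A vector in Euclidean 4-space `𝔼⁴`. -/
def vec4 (a b c d : ℝ) : EuclideanSpace ℝ (Fin 4) :=
  (WithLp.equiv 2 (Fin 4 → ℝ)).symm ![a, b, c, d]

/-- Partial derivative in the `i`-th variable (`i = 0,1,2` for `u,v,w`)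
of a map `ℝ³ → 𝔼⁴`. -/
def pd : Fin 3 → (ℝ → ℝ → ℝ → EuclideanSpace ℝ (Fin 4)) →
    ℝ → ℝ → ℝ → EuclideanSpace ℝ (Fin 4)
  | 0, X, u, v, w => deriv (fun t => X t v w) u
  | 1, X, u, v, w => deriv (fun t => X u t w) v
  | 2, X, u, v, w => deriv (fun t => X u v t) w

/-- The rotational hypersurface in `𝔼⁴` generated by the profile curve
`u ↦ (f u, 0, 0, φ u)` rotated about the `x₄`-axis. -/
def rotHyp (f φ : ℝ → ℝ) (u v w : ℝ) : EuclideanSpace ℝ (Fin 4) :=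
  vec4 (f u * cos v * cos w) (f u * sin v * cos w) (f u * sin w) (φ u)

/-- The Gauss map `G = W^{-1/2}·(φ'·cos v·cos w, φ'·sin v·cos w, φ'·sin w, -f')`,
where `W = f'² + φ'²`. -/
def gaussMap (f φ : ℝ → ℝ) (u v w : ℝ) : EuclideanSpace ℝ (Fin 4) :=
  ((deriv f u ^ 2 + deriv φ u ^ 2) ^ (-(1 : ℝ) / 2)) •
    vec4 (deriv φ u * cos v * cos w) (deriv φ u * sin v * cos w)
      (deriv φ u * sin w) (-deriv f u)

/-- The first fundamental form matrix `I = (⟨∂ᵢx, ∂ⱼx⟩)ᵢⱼ`. -/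
def firstFF (f φ : ℝ → ℝ) (u v w : ℝ) : Matrix (Fin 3) (Fin 3) ℝ :=
  Matrix.of fun i j => (inner ℝ (pd i (rotHyp f φ) u v w) (pd j (rotHyp f φ) u v w) : ℝ)

/-- The second fundamental form matrix `II = (⟨∂ᵢ∂ⱼx, G⟩)ᵢⱼ`. -/
def secondFF (f φ : ℝ → ℝ) (u v w : ℝ) : Matrix (Fin 3) (Fin 3) ℝ :=
  Matrix.of fun i j => (inner ℝ (pd i (pd j (rotHyp f φ)) u v w) (gaussMap f φ u v w) : ℝ)

/-- The third fundamental form matrix `III = (⟨∂ᵢG, ∂ⱼG⟩)ᵢⱼ`. -/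
def thirdFF (f φ : ℝ → ℝ) (u v w : ℝ) : Matrix (Fin 3) (Fin 3) ℝ :=
  Matrix.of fun i j => (inner ℝ (pd i (gaussMap f φ) u v w) (pd j (gaussMap f φ) u v w) : ℝ)

/-- The shape operator matrix `S = I⁻¹ · II`. -/
def shapeOp (f φ : ℝ → ℝ) (u v w : ℝ) : Matrix (Fin 3) (Fin 3) ℝ :=
  (firstFF f φ u v w)⁻¹ * secondFF f φ u v w

/-- The fourth fundamental form matrix `IV = III · S`. -/
def fourthFF (f φ : ℝ → ℝ) (u v w : ℝ) : Matrix (Fin 3) (Fin 3) ℝ :=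
  thirdFF f φ u v w * shapeOp f φ u v w

lemma inner_vec4 (a b c d a' b' c' d' : ℝ) :
    (inner ℝ (vec4 a b c d) (vec4 a' b' c' d') : ℝ) = a*a' + b*b' + c*c' + d*d' := by
  simp [vec4, PiLp.inner_apply, Fin.sum_univ_four, RCLike.inner_apply]; ring

lemma smul_vec4 (r a b c d : ℝ) : r • vec4 a b c d = vec4 (r*a) (r*b) (r*c) (r*d) := by
  simp [vec4]; ext i; fin_cases i <;> simp

lemma add_vec4 (a b c d a' b' c' d' : ℝ) :
    vec4 a b c d + vec4 a' b' c' d' = vec4 (a+a') (b+b') (c+c') (d+d') := by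
  ext i; fin_cases i <;> simp [vec4]

lemma hd_congr {g : ℝ → ℝ} {d d' t : ℝ} (h : HasDerivAt g d t) (e : d = d') :
    HasDerivAt g d' t := e ▸ h

lemma hasDerivAt_vec4 {a b c d : ℝ → ℝ} {a' b' c' d' t : ℝ}
    (ha : HasDerivAt a a' t) (hb : HasDerivAt b b' t) (hc : HasDerivAt c c' t)
    (hd : HasDerivAt d d' t) :
    HasDerivAt (fun s => vec4 (a s) (b s) (c s) (d s)) (vec4 a' b' c' d') t := by
  have h : HasDerivAt (fun s => ![a s, b s, c s, d s]) ![a',b',c',d'] t := by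
    rw [hasDerivAt_pi]
    intro i; fin_cases i <;> simpa
  have := ((EuclideanSpace.equiv (Fin 4) ℝ).symm.toContinuousLinearMap).hasFDerivAt.comp_hasDerivAt t h
  exact this

variable {f φ : ℝ → ℝ}

lemma pd0_rot (hf : Differentiable ℝ f) (hφ : Differentiable ℝ φ) (u v w : ℝ) :
    pd 0 (rotHyp f φ) u v w =
      vec4 (deriv f u * cos v * cos w) (deriv f u * sin v * cos w)
        (deriv f u * sin w) (deriv φ u) := by
  have h : HasDerivAt (fun t => rotHyp f φ t v w)
      (vec4 (deriv f u * cos v * cos w) (deriv f u * sin v * cos w)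
        (deriv f u * sin w) (deriv φ u)) u := by
    unfold rotHyp
    exact hasDerivAt_vec4 (((hf u).hasDerivAt.mul_const _).mul_const _)
      (((hf u).hasDerivAt.mul_const _).mul_const _)
      ((hf u).hasDerivAt.mul_const _) (hφ u).hasDerivAt
  simpa [pd] using h.deriv

lemma pd1_rot (u v w : ℝ) :
    pd 1 (rotHyp f φ) u v w =
      vec4 (-(f u * sin v * cos w)) (f u * cos v * cos w) 0 0 := by
  have h : HasDerivAt (fun t => rotHyp f φ u t w)
      (vec4 (-(f u * sin v * cos w)) (f u * cos v * cos w) 0 0) v := by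
    unfold rotHyp
    exact hasDerivAt_vec4
      (hd_congr (((hasDerivAt_cos v).const_mul (f u)).mul_const (cos w)) (by ring))
      (hd_congr (((hasDerivAt_sin v).const_mul (f u)).mul_const (cos w)) (by ring))
      (hasDerivAt_const _ _) (hasDerivAt_const _ _)
  simpa [pd] using h.deriv

lemma pd2_rot (u v w : ℝ) :
    pd 2 (rotHyp f φ) u v w =
      vec4 (-(f u * cos v * sin w)) (-(f u * sin v * sin w)) (f u * cos w) 0 := by
  have h : HasDerivAt (fun t => rotHyp f φ u v t)
      (vec4 (-(f u * cos v * sin w)) (-(f u * sin v * sin w)) (f u * cos w) 0) w := by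
    unfold rotHyp
    exact hasDerivAt_vec4
      (hd_congr ((hasDerivAt_cos w).const_mul (f u * cos v)) (by ring))
      (hd_congr ((hasDerivAt_cos w).const_mul (f u * sin v)) (by ring))
      (hd_congr ((hasDerivAt_sin w).const_mul (f u)) rfl)
      (hasDerivAt_const _ _)
  simpa [pd] using h.deriv

lemma firstFF_eq (hf : Differentiable ℝ f) (hφ : Differentiable ℝ φ) (u v w : ℝ) :
    firstFF f φ u v w =
      Matrix.diagonal ![deriv f u ^ 2 + deriv φ u ^ 2, f u ^ 2 * cos w ^ 2, f u ^ 2] := by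
  ext i j
  fin_cases i <;> fin_cases j <;>
    simp only [firstFF, Matrix.of_apply, Fin.zero_eta, Fin.mk_one, Fin.reduceFinMk,
      pd0_rot hf hφ, pd1_rot, pd2_rot, inner_vec4, Matrix.diagonal_apply, Fin.isValue] <;>
    norm_num [Fin.ext_iff]
  all_goals try simp only [Matrix.cons_val_two, Matrix.tail_cons, Matrix.head_cons]
  all_goals (ring_nf; try (simp only [Real.sin_sq]; ring))

-- second derivatives
lemma pd00_rot (hf : Differentiable ℝ (deriv f)) (hφ : Differentiable ℝ (deriv φ))
    (hf1 : Differentiable ℝ f) (hφ1 : Differentiable ℝ φ) (u v w : ℝ) :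
    pd 0 (pd 0 (rotHyp f φ)) u v w =
      vec4 (deriv (deriv f) u * cos v * cos w) (deriv (deriv f) u * sin v * cos w)
        (deriv (deriv f) u * sin w) (deriv (deriv φ) u) := by
  have he : (fun t => pd 0 (rotHyp f φ) t v w) = fun t =>
      vec4 (deriv f t * cos v * cos w) (deriv f t * sin v * cos w)
        (deriv f t * sin w) (deriv φ t) := funext fun t => pd0_rot hf1 hφ1 t v w
  have h : HasDerivAt (fun t =>
      vec4 (deriv f t * cos v * cos w) (deriv f t * sin v * cos w)
        (deriv f t * sin w) (deriv φ t))
      (vec4 (deriv (deriv f) u * cos v * cos w) (deriv (deriv f) u * sin v * cos w)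
        (deriv (deriv f) u * sin w) (deriv (deriv φ) u)) u :=
    hasDerivAt_vec4 (((hf u).hasDerivAt.mul_const _).mul_const _)
      (((hf u).hasDerivAt.mul_const _).mul_const _)
      ((hf u).hasDerivAt.mul_const _) (hφ u).hasDerivAt
  show deriv (fun t => pd 0 (rotHyp f φ) t v w) u = _
  rw [he]; exact h.deriv

lemma pd10_rot (hf1 : Differentiable ℝ f) (hφ1 : Differentiable ℝ φ) (u v w : ℝ) :
    pd 1 (pd 0 (rotHyp f φ)) u v w =
      vec4 (-(deriv f u * sin v * cos w)) (deriv f u * cos v * cos w) 0 0 := by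
  have he : (fun t => pd 0 (rotHyp f φ) u t w) = fun t =>
      vec4 (deriv f u * cos t * cos w) (deriv f u * sin t * cos w)
        (deriv f u * sin w) (deriv φ u) := funext fun t => pd0_rot hf1 hφ1 u t w
  have h : HasDerivAt (fun t =>
      vec4 (deriv f u * cos t * cos w) (deriv f u * sin t * cos w)
        (deriv f u * sin w) (deriv φ u))
      (vec4 (-(deriv f u * sin v * cos w)) (deriv f u * cos v * cos w) 0 0) v :=
    hasDerivAt_vec4
      (hd_congr (((hasDerivAt_cos v).const_mul (deriv f u)).mul_const (cos w)) (by ring))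
      (hd_congr (((hasDerivAt_sin v).const_mul (deriv f u)).mul_const (cos w)) (by ring))
      (hasDerivAt_const _ _) (hasDerivAt_const _ _)
  show deriv (fun t => pd 0 (rotHyp f φ) u t w) v = _
  rw [he]; exact h.deriv

lemma pd20_rot (hf1 : Differentiable ℝ f) (hφ1 : Differentiable ℝ φ) (u v w : ℝ) :
    pd 2 (pd 0 (rotHyp f φ)) u v w =
      vec4 (-(deriv f u * cos v * sin w)) (-(deriv f u * sin v * sin w))
        (deriv f u * cos w) 0 := by
  have he : (fun t => pd 0 (rotHyp f φ) u v t) = fun t =>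
      vec4 (deriv f u * cos v * cos t) (deriv f u * sin v * cos t)
        (deriv f u * sin t) (deriv φ u) := funext fun t => pd0_rot hf1 hφ1 u v t
  have h : HasDerivAt (fun t =>
      vec4 (deriv f u * cos v * cos t) (deriv f u * sin v * cos t)
        (deriv f u * sin t) (deriv φ u))
      (vec4 (-(deriv f u * cos v * sin w)) (-(deriv f u * sin v * sin w))
        (deriv f u * cos w) 0) w :=
    hasDerivAt_vec4
      (hd_congr ((hasDerivAt_cos w).const_mul (deriv f u * cos v)) (by ring))
      (hd_congr ((hasDerivAt_cos w).const_mul (deriv f u * sin v)) (by ring))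
      (hd_congr ((hasDerivAt_sin w).const_mul (deriv f u)) rfl)
      (hasDerivAt_const _ _)
  show deriv (fun t => pd 0 (rotHyp f φ) u v t) w = _
  rw [he]; exact h.deriv

lemma pd01_rot (hf1 : Differentiable ℝ f) (u v w : ℝ) :
    pd 0 (pd 1 (rotHyp f φ)) u v w =
      vec4 (-(deriv f u * sin v * cos w)) (deriv f u * cos v * cos w) 0 0 := by
  have he : (fun t => pd 1 (rotHyp f φ) t v w) = fun t =>
      vec4 (-(f t * sin v * cos w)) (f t * cos v * cos w) 0 0 :=
    funext fun t => pd1_rot t v w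
  have h : HasDerivAt (fun t =>
      vec4 (-(f t * sin v * cos w)) (f t * cos v * cos w) 0 0)
      (vec4 (-(deriv f u * sin v * cos w)) (deriv f u * cos v * cos w) 0 0) u :=
    hasDerivAt_vec4
      (hd_congr (((hf1 u).hasDerivAt.mul_const (sin v)).mul_const (cos w)).neg (by ring))
      (hd_congr (((hf1 u).hasDerivAt.mul_const (cos v)).mul_const (cos w)) rfl)
      (hasDerivAt_const _ _) (hasDerivAt_const _ _)
  show deriv (fun t => pd 1 (rotHyp f φ) t v w) u = _
  rw [he]; exact h.deriv

lemma pd11_rot (u v w : ℝ) :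
    pd 1 (pd 1 (rotHyp f φ)) u v w =
      vec4 (-(f u * cos v * cos w)) (-(f u * sin v * cos w)) 0 0 := by
  have he : (fun t => pd 1 (rotHyp f φ) u t w) = fun t =>
      vec4 (-(f u * sin t * cos w)) (f u * cos t * cos w) 0 0 :=
    funext fun t => pd1_rot u t w
  have h : HasDerivAt (fun t =>
      vec4 (-(f u * sin t * cos w)) (f u * cos t * cos w) 0 0)
      (vec4 (-(f u * cos v * cos w)) (-(f u * sin v * cos w)) 0 0) v :=
    hasDerivAt_vec4
      (hd_congr (((hasDerivAt_sin v).const_mul (f u)).mul_const (cos w)).neg (by ring))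
      (hd_congr (((hasDerivAt_cos v).const_mul (f u)).mul_const (cos w)) (by ring))
      (hasDerivAt_const _ _) (hasDerivAt_const _ _)
  show deriv (fun t => pd 1 (rotHyp f φ) u t w) v = _
  rw [he]; exact h.deriv

lemma pd21_rot (u v w : ℝ) :
    pd 2 (pd 1 (rotHyp f φ)) u v w =
      vec4 (f u * sin v * sin w) (-(f u * cos v * sin w)) 0 0 := by
  have he : (fun t => pd 1 (rotHyp f φ) u v t) = fun t =>
      vec4 (-(f u * sin v * cos t)) (f u * cos v * cos t) 0 0 :=
    funext fun t => pd1_rot u v t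
  have h : HasDerivAt (fun t =>
      vec4 (-(f u * sin v * cos t)) (f u * cos v * cos t) 0 0)
      (vec4 (f u * sin v * sin w) (-(f u * cos v * sin w)) 0 0) w :=
    hasDerivAt_vec4
      (hd_congr ((hasDerivAt_cos w).const_mul (f u * sin v)).neg (by ring))
      (hd_congr ((hasDerivAt_cos w).const_mul (f u * cos v)) (by ring))
      (hasDerivAt_const _ _) (hasDerivAt_const _ _)
  show deriv (fun t => pd 1 (rotHyp f φ) u v t) w = _
  rw [he]; exact h.deriv

lemma pd02_rot (hf1 : Differentiable ℝ f) (u v w : ℝ) :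
    pd 0 (pd 2 (rotHyp f φ)) u v w =
      vec4 (-(deriv f u * cos v * sin w)) (-(deriv f u * sin v * sin w))
        (deriv f u * cos w) 0 := by
  have he : (fun t => pd 2 (rotHyp f φ) t v w) = fun t =>
      vec4 (-(f t * cos v * sin w)) (-(f t * sin v * sin w)) (f t * cos w) 0 :=
    funext fun t => pd2_rot t v w
  have h : HasDerivAt (fun t =>
      vec4 (-(f t * cos v * sin w)) (-(f t * sin v * sin w)) (f t * cos w) 0)
      (vec4 (-(deriv f u * cos v * sin w)) (-(deriv f u * sin v * sin w))
        (deriv f u * cos w) 0) u :=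
    hasDerivAt_vec4
      (hd_congr (((hf1 u).hasDerivAt.mul_const (cos v)).mul_const (sin w)).neg (by ring))
      (hd_congr (((hf1 u).hasDerivAt.mul_const (sin v)).mul_const (sin w)).neg (by ring))
      (hd_congr ((hf1 u).hasDerivAt.mul_const (cos w)) rfl)
      (hasDerivAt_const _ _)
  show deriv (fun t => pd 2 (rotHyp f φ) t v w) u = _
  rw [he]; exact h.deriv

lemma pd12_rot (u v w : ℝ) :
    pd 1 (pd 2 (rotHyp f φ)) u v w =
      vec4 (f u * sin v * sin w) (-(f u * cos v * sin w)) 0 0 := by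
  have he : (fun t => pd 2 (rotHyp f φ) u t w) = fun t =>
      vec4 (-(f u * cos t * sin w)) (-(f u * sin t * sin w)) (f u * cos w) 0 :=
    funext fun t => pd2_rot u t w
  have h : HasDerivAt (fun t =>
      vec4 (-(f u * cos t * sin w)) (-(f u * sin t * sin w)) (f u * cos w) 0)
      (vec4 (f u * sin v * sin w) (-(f u * cos v * sin w)) 0 0) v :=
    hasDerivAt_vec4
      (hd_congr (((hasDerivAt_cos v).const_mul (f u)).mul_const (sin w)).neg (by ring))
      (hd_congr (((hasDerivAt_sin v).const_mul (f u)).mul_const (sin w)).neg (by ring))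
      (hasDerivAt_const _ _) (hasDerivAt_const _ _)
  show deriv (fun t => pd 2 (rotHyp f φ) u t w) v = _
  rw [he]; exact h.deriv

lemma pd22_rot (u v w : ℝ) :
    pd 2 (pd 2 (rotHyp f φ)) u v w =
      vec4 (-(f u * cos v * cos w)) (-(f u * sin v * cos w)) (-(f u * sin w)) 0 := by
  have he : (fun t => pd 2 (rotHyp f φ) u v t) = fun t =>
      vec4 (-(f u * cos v * sin t)) (-(f u * sin v * sin t)) (f u * cos t) 0 :=
    funext fun t => pd2_rot u v t
  have h : HasDerivAt (fun t =>
      vec4 (-(f u * cos v * sin t)) (-(f u * sin v * sin t)) (f u * cos t) 0)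
      (vec4 (-(f u * cos v * cos w)) (-(f u * sin v * cos w)) (-(f u * sin w)) 0) w :=
    hasDerivAt_vec4
      (hd_congr ((hasDerivAt_sin w).const_mul (f u * cos v)).neg (by ring))
      (hd_congr ((hasDerivAt_sin w).const_mul (f u * sin v)).neg (by ring))
      (hd_congr ((hasDerivAt_cos w).const_mul (f u)) (by ring))
      (hasDerivAt_const _ _)
  show deriv (fun t => pd 2 (rotHyp f φ) u v t) w = _
  rw [he]; exact h.deriv

lemma gauss_eq (u v w : ℝ) : gaussMap f φ u v w =
    vec4 ((deriv f u ^ 2 + deriv φ u ^ 2) ^ (-(1 : ℝ) / 2) * (deriv φ u * cos v * cos w))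
      ((deriv f u ^ 2 + deriv φ u ^ 2) ^ (-(1 : ℝ) / 2) * (deriv φ u * sin v * cos w))
      ((deriv f u ^ 2 + deriv φ u ^ 2) ^ (-(1 : ℝ) / 2) * (deriv φ u * sin w))
      ((deriv f u ^ 2 + deriv φ u ^ 2) ^ (-(1 : ℝ) / 2) * (-deriv f u)) := by
  rw [gaussMap, smul_vec4]

lemma pd1_gauss (u v w : ℝ) :
    pd 1 (gaussMap f φ) u v w =
      vec4 (-((deriv f u ^ 2 + deriv φ u ^ 2) ^ (-(1 : ℝ) / 2) * (deriv φ u * sin v * cos w)))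
        ((deriv f u ^ 2 + deriv φ u ^ 2) ^ (-(1 : ℝ) / 2) * (deriv φ u * cos v * cos w)) 0 0 := by
  set C := (deriv f u ^ 2 + deriv φ u ^ 2) ^ (-(1 : ℝ) / 2) with hC
  have he : (fun t => gaussMap f φ u t w) = fun t =>
      vec4 (C * (deriv φ u * cos t * cos w)) (C * (deriv φ u * sin t * cos w))
        (C * (deriv φ u * sin w)) (C * (-deriv f u)) := funext fun t => gauss_eq u t w
  have h := hasDerivAt_vec4
      (hd_congr ((((hasDerivAt_cos v).const_mul (deriv φ u)).mul_const (cos w)).const_mul C)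
        (by ring : _ = -(C * (deriv φ u * sin v * cos w))))
      (hd_congr ((((hasDerivAt_sin v).const_mul (deriv φ u)).mul_const (cos w)).const_mul C)
        (by ring : _ = C * (deriv φ u * cos v * cos w)))
      (hasDerivAt_const v (C * (deriv φ u * sin w)))
      (hasDerivAt_const v (C * (-deriv f u)))
  show deriv (fun t => gaussMap f φ u t w) v = _
  rw [he]; exact h.deriv

lemma pd2_gauss (u v w : ℝ) :
    pd 2 (gaussMap f φ) u v w =
      vec4 (-((deriv f u ^ 2 + deriv φ u ^ 2) ^ (-(1 : ℝ) / 2) * (deriv φ u * cos v * sin w)))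
        (-((deriv f u ^ 2 + deriv φ u ^ 2) ^ (-(1 : ℝ) / 2) * (deriv φ u * sin v * sin w)))
        ((deriv f u ^ 2 + deriv φ u ^ 2) ^ (-(1 : ℝ) / 2) * (deriv φ u * cos w)) 0 := by
  set C := (deriv f u ^ 2 + deriv φ u ^ 2) ^ (-(1 : ℝ) / 2) with hC
  have he : (fun t => gaussMap f φ u v t) = fun t =>
      vec4 (C * (deriv φ u * cos v * cos t)) (C * (deriv φ u * sin v * cos t))
        (C * (deriv φ u * sin t)) (C * (-deriv f u)) := funext fun t => gauss_eq u v t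
  have h := hasDerivAt_vec4
      (hd_congr (((hasDerivAt_cos w).const_mul (deriv φ u * cos v)).const_mul C)
        (by ring : _ = -(C * (deriv φ u * cos v * sin w))))
      (hd_congr (((hasDerivAt_cos w).const_mul (deriv φ u * sin v)).const_mul C)
        (by ring : _ = -(C * (deriv φ u * sin v * sin w))))
      (hd_congr (((hasDerivAt_sin w).const_mul (deriv φ u)).const_mul C)
        (by ring : _ = C * (deriv φ u * cos w)))
      (hasDerivAt_const w (C * (-deriv f u)))
  show deriv (fun t => gaussMap f φ u v t) w = _
  rw [he]; exact h.deriv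

lemma pd0_gauss (hf2 : Differentiable ℝ (deriv f)) (hφ2 : Differentiable ℝ (deriv φ))
    (u v w : ℝ) (hW : deriv f u ^ 2 + deriv φ u ^ 2 ≠ 0) :
    pd 0 (gaussMap f φ) u v w =
      vec4
        ((-(1:ℝ)/2 * (deriv f u ^ 2 + deriv φ u ^ 2) ^ (-(1:ℝ)/2 - 1) *
            (2 * deriv f u * deriv (deriv f) u + 2 * deriv φ u * deriv (deriv φ) u)) *
            (deriv φ u * cos v * cos w) +
          (deriv f u ^ 2 + deriv φ u ^ 2) ^ (-(1:ℝ)/2) * (deriv (deriv φ) u * cos v * cos w))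
        ((-(1:ℝ)/2 * (deriv f u ^ 2 + deriv φ u ^ 2) ^ (-(1:ℝ)/2 - 1) *
            (2 * deriv f u * deriv (deriv f) u + 2 * deriv φ u * deriv (deriv φ) u)) *
            (deriv φ u * sin v * cos w) +
          (deriv f u ^ 2 + deriv φ u ^ 2) ^ (-(1:ℝ)/2) * (deriv (deriv φ) u * sin v * cos w))
        ((-(1:ℝ)/2 * (deriv f u ^ 2 + deriv φ u ^ 2) ^ (-(1:ℝ)/2 - 1) *
            (2 * deriv f u * deriv (deriv f) u + 2 * deriv φ u * deriv (deriv φ) u)) *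
            (deriv φ u * sin w) +
          (deriv f u ^ 2 + deriv φ u ^ 2) ^ (-(1:ℝ)/2) * (deriv (deriv φ) u * sin w))
        ((-(1:ℝ)/2 * (deriv f u ^ 2 + deriv φ u ^ 2) ^ (-(1:ℝ)/2 - 1) *
            (2 * deriv f u * deriv (deriv f) u + 2 * deriv φ u * deriv (deriv φ) u)) *
            (-deriv f u) +
          (deriv f u ^ 2 + deriv φ u ^ 2) ^ (-(1:ℝ)/2) * (-deriv (deriv f) u)) := by
  have hWd : HasDerivAt (fun t => deriv f t ^ 2 + deriv φ t ^ 2)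
      (2 * deriv f u * deriv (deriv f) u + 2 * deriv φ u * deriv (deriv φ) u) u :=
    hd_congr (((hf2 u).hasDerivAt.pow 2).add ((hφ2 u).hasDerivAt.pow 2)) (by ring)
  have hg : HasDerivAt (fun t => (deriv f t ^ 2 + deriv φ t ^ 2) ^ (-(1:ℝ)/2))
      (-(1:ℝ)/2 * (deriv f u ^ 2 + deriv φ u ^ 2) ^ (-(1:ℝ)/2 - 1) *
        (2 * deriv f u * deriv (deriv f) u + 2 * deriv φ u * deriv (deriv φ) u)) u := by
    have := (Real.hasDerivAt_rpow_const (x := deriv f u ^ 2 + deriv φ u ^ 2)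
      (p := -(1:ℝ)/2) (Or.inl hW)).comp u hWd
    simpa [Function.comp_def, mul_assoc] using this
  have hV : HasDerivAt (fun t =>
      vec4 (deriv φ t * cos v * cos w) (deriv φ t * sin v * cos w)
        (deriv φ t * sin w) (-deriv f t))
      (vec4 (deriv (deriv φ) u * cos v * cos w) (deriv (deriv φ) u * sin v * cos w)
        (deriv (deriv φ) u * sin w) (-deriv (deriv f) u)) u :=
    hasDerivAt_vec4 (((hφ2 u).hasDerivAt.mul_const _).mul_const _)
      (((hφ2 u).hasDerivAt.mul_const _).mul_const _)
      ((hφ2 u).hasDerivAt.mul_const _) (hf2 u).hasDerivAt.neg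
  have h := hg.smul hV
  show deriv (fun t => gaussMap f φ t v w) u = _
  unfold gaussMap
  erw [h.deriv]; rw [smul_vec4, smul_vec4, add_vec4]
  ring_nf

lemma secondFF_eq (hf1 : Differentiable ℝ f) (hφ1 : Differentiable ℝ φ)
    (hf2 : Differentiable ℝ (deriv f)) (hφ2 : Differentiable ℝ (deriv φ)) (u v w : ℝ) :
    secondFF f φ u v w =
      Matrix.diagonal
        ![(deriv (deriv f) u * deriv φ u - deriv f u * deriv (deriv φ) u) *
            (deriv f u ^ 2 + deriv φ u ^ 2) ^ (-(1 : ℝ) / 2),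
          -(f u * deriv φ u) * cos w ^ 2 * (deriv f u ^ 2 + deriv φ u ^ 2) ^ (-(1 : ℝ) / 2),
          -(f u * deriv φ u) * (deriv f u ^ 2 + deriv φ u ^ 2) ^ (-(1 : ℝ) / 2)] := by
  ext i j
  fin_cases i <;> fin_cases j <;>
    simp only [secondFF, Matrix.of_apply, Fin.zero_eta, Fin.mk_one, Fin.reduceFinMk,
      pd00_rot hf2 hφ2 hf1 hφ1, pd10_rot hf1 hφ1, pd20_rot hf1 hφ1, pd01_rot hf1,
      pd11_rot, pd21_rot, pd02_rot hf1, pd12_rot, pd22_rot, gauss_eq,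
      inner_vec4, Matrix.diagonal_apply, Fin.isValue] <;>
    norm_num [Fin.ext_iff]
  all_goals try simp only [Matrix.cons_val_two, Matrix.tail_cons, Matrix.head_cons]
  all_goals (ring_nf; try (simp only [Real.sin_sq]; ring))

set_option maxHeartbeats 2000000 in
lemma thirdFF_eq (hf2 : Differentiable ℝ (deriv f)) (hφ2 : Differentiable ℝ (deriv φ))
    (u v w : ℝ) (hW : deriv f u ^ 2 + deriv φ u ^ 2 ≠ 0) :
    thirdFF f φ u v w =
      Matrix.diagonal
        ![(-(1:ℝ)/2 * (deriv f u ^ 2 + deriv φ u ^ 2) ^ (-(1:ℝ)/2 - 1) *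
              (2 * deriv f u * deriv (deriv f) u + 2 * deriv φ u * deriv (deriv φ) u) *
              deriv φ u +
            (deriv f u ^ 2 + deriv φ u ^ 2) ^ (-(1:ℝ)/2) * deriv (deriv φ) u) ^ 2 +
          (-(1:ℝ)/2 * (deriv f u ^ 2 + deriv φ u ^ 2) ^ (-(1:ℝ)/2 - 1) *
              (2 * deriv f u * deriv (deriv f) u + 2 * deriv φ u * deriv (deriv φ) u) *
              deriv f u +
            (deriv f u ^ 2 + deriv φ u ^ 2) ^ (-(1:ℝ)/2) * deriv (deriv f) u) ^ 2,
          ((deriv f u ^ 2 + deriv φ u ^ 2) ^ (-(1:ℝ)/2) * deriv φ u) ^ 2 * cos w ^ 2,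
          ((deriv f u ^ 2 + deriv φ u ^ 2) ^ (-(1:ℝ)/2) * deriv φ u) ^ 2] := by
  ext i j
  fin_cases i <;> fin_cases j <;>
    simp only [thirdFF, Matrix.of_apply, Fin.zero_eta, Fin.mk_one, Fin.reduceFinMk,
      pd0_gauss hf2 hφ2 u v w hW, pd1_gauss, pd2_gauss,
      inner_vec4, Matrix.diagonal_apply, Fin.isValue] <;>
    norm_num [Fin.ext_iff]
  all_goals try simp only [Matrix.cons_val_two, Matrix.tail_cons, Matrix.head_cons]
  all_goals (ring_nf; try (simp only [Real.sin_sq]; ring))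


/-- At every point with `W = f'² + φ'² > 0`, `f(u) ≠ 0` and
`cos w ≠ 0`, the fourth fundamental form matrix `IV = III·S` of the rotational
hypersurface is `IV = diag(-ψ³/W^{7/2}, -(φ'³/(f·W^{3/2}))·cos²w, -φ'³/(f·W^{3/2}))`,
where `ψ = f'·φ'' - f''·φ'`. -/
theorem rotHyp_fourthFF (f φ : ℝ → ℝ) (hf : ContDiff ℝ (⊤ : ℕ∞) f) (hφ : ContDiff ℝ (⊤ : ℕ∞) φ)
    (u v w : ℝ) (hW : 0 < deriv f u ^ 2 + deriv φ u ^ 2)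
    (hfu : f u ≠ 0) (hw : cos w ≠ 0) :
    fourthFF f φ u v w =
      Matrix.diagonal
        ![-((deriv f u * deriv (deriv φ) u - deriv (deriv f) u * deriv φ u) ^ 3
            / (deriv f u ^ 2 + deriv φ u ^ 2) ^ ((7 : ℝ) / 2)),
          -(deriv φ u ^ 3
            / (f u * (deriv f u ^ 2 + deriv φ u ^ 2) ^ ((3 : ℝ) / 2))) * cos w ^ 2,
          -(deriv φ u ^ 3
            / (f u * (deriv f u ^ 2 + deriv φ u ^ 2) ^ ((3 : ℝ) / 2)))] := by
  have hf1 : Differentiable ℝ f := hf.differentiable (by simp)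
  have hφ1 : Differentiable ℝ φ := hφ.differentiable (by simp)
  have hf2 : Differentiable ℝ (deriv f) := by
    have := (contDiff_infty_iff_deriv.mp (hf.of_le (by simp))).2
    exact this.differentiable (by simp)
  have hφ2 : Differentiable ℝ (deriv φ) := by
    have := (contDiff_infty_iff_deriv.mp (hφ.of_le (by simp))).2
    exact this.differentiable (by simp)
  set s := Real.sqrt (deriv f u ^ 2 + deriv φ u ^ 2) with hs_def
  have hs : 0 < s := Real.sqrt_pos.mpr hW
  have hb : deriv f u ^ 2 + deriv φ u ^ 2 = s ^ 2 := (Real.sq_sqrt hW.le).symm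
  have base : ∀ q : ℝ, (s ^ 2 : ℝ) ^ q = s ^ (2 * q) := by
    intro q
    rw [← Real.rpow_natCast s 2, ← Real.rpow_mul hs.le]
    norm_num
  have f1 : (s ^ 2 : ℝ) ^ (-(1:ℝ)/2) = s⁻¹ := by
    rw [base]; norm_num [Real.rpow_neg_one]
  have f2 : (s ^ 2 : ℝ) ^ (-(1:ℝ)/2 - 1) = (s^3)⁻¹ := by
    rw [base, show (2:ℝ) * (-(1:ℝ)/2 - 1) = -((3:ℕ):ℝ) by norm_num,
      Real.rpow_neg hs.le, Real.rpow_natCast]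
  have f3 : (s ^ 2 : ℝ) ^ ((7:ℝ)/2) = s ^ 7 := by
    rw [base, show (2:ℝ) * ((7:ℝ)/2) = ((7:ℕ):ℝ) by norm_num, Real.rpow_natCast]
  have f4 : (s ^ 2 : ℝ) ^ ((3:ℝ)/2) = s ^ 3 := by
    rw [base, show (2:ℝ) * ((3:ℝ)/2) = ((3:ℕ):ℝ) by norm_num, Real.rpow_natCast]
  unfold fourthFF shapeOp
  rw [firstFF_eq hf1 hφ1, secondFF_eq hf1 hφ1 hf2 hφ2, thirdFF_eq hf2 hφ2 u v w hW.ne']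
  simp only [hb, f1, f2, f3, f4]
  have hinv : (Matrix.diagonal ![s^2, f u ^2 * cos w ^2, f u ^2] :
        Matrix (Fin 3) (Fin 3) ℝ)⁻¹ =
      Matrix.diagonal ![(s^2)⁻¹, (f u ^2 * cos w ^2)⁻¹, (f u ^2)⁻¹] := by
    apply Matrix.inv_eq_right_inv
    rw [Matrix.diagonal_mul_diagonal]
    ext i j
    fin_cases i <;> fin_cases j <;>
      simp [Matrix.one_apply, Fin.ext_iff] <;> field_simp <;> ring
  rw [hinv, Matrix.diagonal_mul_diagonal, Matrix.diagonal_mul_diagonal]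
  refine congrArg Matrix.diagonal ?_
  funext i
  fin_cases i <;> simp only [Pi.mul_apply, Matrix.cons_val_zero, Matrix.cons_val_one,
    Matrix.head_cons, Fin.zero_eta, Fin.mk_one, Fin.reduceFinMk, Matrix.cons_val_two,
    Matrix.tail_cons, Fin.isValue, Matrix.cons_val', Matrix.empty_val',
    Matrix.cons_val_fin_one]
  · field_simp
    linear_combination (-(deriv f u * deriv (deriv φ) u - deriv (deriv f) u * deriv φ u) *
      ((deriv f u * deriv (deriv f) u + deriv φ u * deriv (deriv φ) u) ^ 2 -
        s ^ 2 * (deriv (deriv f) u ^ 2 + deriv (deriv φ) u ^ 2))) * hb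
  · field_simp
  · field_simp

end
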